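/- Let r ≥ 1, 0 ≤ j ≤ 2^{r-1} - 1, and let A = M^{2^r - j} in F_2[x]. Then the length ℓ_A equals j + 1 if j ≠ 0, and equals 2^r + 1 if j = 0. -/

import Mathlib

open Polynomial Finset

/-- The polynomial `M = x^2 + x + 1` over `F_2`. -/
noncomputable def M : Polynomial (ZMod 2) := X ^ 2 + X + 1

/-- The odd part of a binary polynomial: `P` divided by `x^{val_x(P)} (x+1)^{val_{x+1}(P)}`. -/
noncomputable def oddPart (P : Polynomial (ZMod 2)) : Polynomial (ZMod 2) :=
  P / (X ^ P.rootMultiplicity 0 * (X + 1) ^ P.rootMultiplicity 1)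

/-- The Collatz sequence of a binary polynomial `A`:
`A_0 = A`, `A_{2k+1} = oddPart A_{2k}`, `A_{2k+2} = 1 + M * A_{2k+1}`. -/
noncomputable def collatz (A : Polynomial (ZMod 2)) : ℕ → Polynomial (ZMod 2)
  | 0 => A
  | n + 1 => if n % 2 = 0 then oddPart (collatz A n) else 1 + M * collatz A n

/-- `a_k`: the multiplicity of `x` in `A_k`. -/
noncomputable def aSeq (A : Polynomial (ZMod 2)) (k : ℕ) : ℕ :=
  (collatz A k).rootMultiplicity 0

/-- `b_k`: the multiplicity of `x + 1` in `A_k`. -/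
noncomputable def bSeq (A : Polynomial (ZMod 2)) (k : ℕ) : ℕ :=
  (collatz A k).rootMultiplicity 1

/-- The length `ℓ_A = m + 1`, where `m` is the least nonnegative integer
with `A_{2m+1} = 1`. -/
noncomputable def collatzLength (A : Polynomial (ZMod 2)) : ℕ :=
  sInf {m : ℕ | collatz A (2 * m + 1) = 1} + 1

/-! Put `U = x(x+1)`, so that `M = 1 + U` and, in characteristic 2, `M^(2^a) = 1 + U^(2^a)`.
On odd polynomials the Collatz dynamics is the map `collatzStep f = oddPart (1 + M f)`.
The identity `1 + M (1 + U^(e+1) Q) = U (1 + U^e (M Q))` shows that, for `Q ≠ 0`, the odd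
polynomial `1 + U^e Q` needs exactly `e` steps, none of which lands on `1`, to become
`oddPart (1 + M^e Q)`.

Let `n + i = 2^(k+1)` with `0 < i < 2^k`, and let `2^a` be the exact power of 2 dividing `i`.
Then `n = 2^a (2t + 1)` with `t > 0`, and writing `M^(2^(a+1) t) = 1 + U^(2^(a+1)) K` gives
`oddPart (1 + M^n) = 1 + U^(2^a) M^(2^a) K`, which after `2^a` steps becomes
`oddPart (1 + M^(n + 2^a))`. By induction on `i`, `oddPart (1 + M^n)` reaches `1` after
exactly `i` steps. Since `collatzStep (M^(2^r - j)) = oddPart (1 + M^(2^r - j + 1))`, this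
gives the length for `j ≠ 0`, while `M^(2^r) = 1 + U^(2^r)` reaches `oddPart (1 + M^(2^r)) = 1`
in `2^r` steps. -/

theorem isLeast_iterate_succ {α : Type*} {g : α → α} {x y : α} {d : ℕ} (hx : x ≠ y)
    (h : IsLeast {m | g^[m] (g x) = y} d) : IsLeast {m | g^[m] x = y} (d + 1) := by
  refine ⟨h.1, fun m hm => ?_⟩
  cases m with
  | zero => exact absurd hm hx
  | succ m => exact Nat.succ_le_succ (h.2 hm)

noncomputable def U : Polynomial (ZMod 2) := X * (X + 1)

theorem M_eq_one_add_U : M = 1 + U := by unfold M U; ring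

theorem X_add_one_eq_X_sub_C : (X + 1 : Polynomial (ZMod 2)) = X - C 1 := by
  rw [map_one, sub_eq_add_neg, CharTwo.neg_eq]

theorem U_eq_X_sub_C_mul_X_sub_C : U = (X - C 0) * (X - C 1) := by
  rw [U, ← X_add_one_eq_X_sub_C, map_zero, sub_zero]

theorem U_ne_zero : U ≠ 0 := by
  rw [U_eq_X_sub_C_mul_X_sub_C]; exact mul_ne_zero (X_sub_C_ne_zero 0) (X_sub_C_ne_zero 1)

theorem rootMultiplicity_U (a : ZMod 2) : U.rootMultiplicity a = 1 := by
  rw [U_eq_X_sub_C_mul_X_sub_C, rootMultiplicity_mul (U_eq_X_sub_C_mul_X_sub_C ▸ U_ne_zero),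
    rootMultiplicity_X_sub_C, rootMultiplicity_X_sub_C]
  fin_cases a <;> decide

theorem isRoot_U (a : ZMod 2) : U.IsRoot a :=
  (rootMultiplicity_pos U_ne_zero).mp (by rw [rootMultiplicity_U]; exact one_pos)

theorem eval_M (a : ZMod 2) : M.eval a = 1 := by
  rw [M_eq_one_add_U, eval_add, eval_one, (isRoot_U a).eq_zero, add_zero]

theorem M_ne_zero : M ≠ 0 := by
  intro h
  simpa [h] using eval_M 0

theorem eval_U_pow_mul {n : ℕ} (hn : n ≠ 0) (P : Polynomial (ZMod 2)) (a : ZMod 2) :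
    (U ^ n * P).eval a = 0 := by
  simp [(isRoot_U a).eq_zero, zero_pow hn]

theorem one_add_U_pow_mul_ne_one (n : ℕ) {Q : Polynomial (ZMod 2)} (hQ : Q ≠ 0) :
    1 + U ^ n * Q ≠ 1 := by
  simpa using mul_ne_zero (pow_ne_zero n U_ne_zero) hQ

theorem M_pow_two_pow (a : ℕ) : M ^ 2 ^ a = 1 + U ^ 2 ^ a := by
  rw [M_eq_one_add_U, add_pow_char_pow, one_pow]

theorem one_add_M_pow_two_pow (a : ℕ) : 1 + M ^ 2 ^ a = U ^ 2 ^ a := by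
  rw [M_pow_two_pow, ← add_assoc, CharTwo.add_self_eq_zero, zero_add]

theorem M_pow_ne_one {n : ℕ} (hn : n ≠ 0) : M ^ n ≠ 1 := by
  intro h
  have hdeg : (M ^ n).natDegree = n * 2 := by
    have : M.natDegree = 2 := by unfold M; compute_degree!
    rw [natDegree_pow, this]
  rw [h, natDegree_one] at hdeg
  omega

theorem exists_M_pow_two_pow_mul_eq (a : ℕ) {t : ℕ} (ht : t ≠ 0) :
    ∃ K ≠ 0, M ^ (2 ^ a * t) = 1 + U ^ 2 ^ a * K := by
  obtain ⟨K, hK⟩ : U ^ 2 ^ a ∣ M ^ (2 ^ a * t) - 1 := by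
    have := sub_dvd_pow_sub_pow (M ^ 2 ^ a) 1 t
    rwa [one_pow, ← pow_mul, M_pow_two_pow, add_sub_cancel_left] at this
  refine ⟨K, ?_, ?_⟩
  · rintro rfl
    rw [mul_zero, sub_eq_zero] at hK
    exact M_pow_ne_one (by positivity) hK
  · rw [← hK]; ring

theorem X_pow_rootMultiplicity_mul_dvd (P : Polynomial (ZMod 2)) :
    X ^ P.rootMultiplicity 0 * (X + 1) ^ P.rootMultiplicity 1 ∣ P := by
  have h0 := pow_rootMultiplicity_dvd P 0
  have h1 := pow_rootMultiplicity_dvd P 1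
  rw [map_zero, sub_zero] at h0
  rw [← X_add_one_eq_X_sub_C] at h1
  exact (IsCoprime.pow ⟨-1, 1, by ring⟩).mul_dvd h0 h1

theorem oddPart_U_mul (P : Polynomial (ZMod 2)) : oddPart (U * P) = oddPart P := by
  rcases eq_or_ne P 0 with rfl | hP
  · simp [oddPart]
  have hUP : U * P ≠ 0 := mul_ne_zero U_ne_zero hP
  have hden : X ^ (1 + P.rootMultiplicity 0) * (X + 1) ^ (1 + P.rootMultiplicity 1) =
      U * (X ^ P.rootMultiplicity 0 * (X + 1) ^ P.rootMultiplicity 1) := by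
    rw [U]; ring
  rw [oddPart, rootMultiplicity_mul hUP, rootMultiplicity_mul hUP, rootMultiplicity_U,
    rootMultiplicity_U, hden, EuclideanDomain.mul_div_mul_cancel U_ne_zero
      (X_pow_rootMultiplicity_mul_dvd P), oddPart]

theorem oddPart_U_pow_mul (n : ℕ) (P : Polynomial (ZMod 2)) :
    oddPart (U ^ n * P) = oddPart P := by
  induction n with
  | zero => rw [pow_zero, one_mul]
  | succ n ih => rw [pow_succ', mul_assoc, oddPart_U_mul, ih]

theorem oddPart_eq_self {P : Polynomial (ZMod 2)} (h0 : P.eval 0 ≠ 0) (h1 : P.eval 1 ≠ 0) :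
    oddPart P = P := by
  rw [oddPart, rootMultiplicity_eq_zero h0, rootMultiplicity_eq_zero h1, pow_zero, pow_zero,
    one_mul, EuclideanDomain.div_one]

theorem oddPart_one_add_U_pow_mul {n : ℕ} (hn : n ≠ 0) (Q : Polynomial (ZMod 2)) :
    oddPart (1 + U ^ n * Q) = 1 + U ^ n * Q :=
  oddPart_eq_self (by simp [eval_U_pow_mul hn]) (by simp [eval_U_pow_mul hn])

theorem oddPart_M_pow (n : ℕ) : oddPart (M ^ n) = M ^ n :=
  oddPart_eq_self (by simp [eval_M]) (by simp [eval_M])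

noncomputable def collatzStep (f : Polynomial (ZMod 2)) : Polynomial (ZMod 2) :=
  oddPart (1 + M * f)

theorem collatz_two_mul_add_one (A : Polynomial (ZMod 2)) (k : ℕ) :
    collatz A (2 * k + 1) = collatzStep^[k] (oddPart A) := by
  induction k with
  | zero => simp [collatz]
  | succ k ih =>
    rw [Function.iterate_succ_apply', ← ih, collatzStep]
    simp [collatz, Nat.mul_add, Nat.add_mod]

theorem collatzLength_eq_of_isLeast {A : Polynomial (ZMod 2)} {d : ℕ}
    (h : IsLeast {m | collatzStep^[m] (oddPart A) = 1} d) : collatzLength A = d + 1 := by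
  simp only [collatzLength, collatz_two_mul_add_one, h.csInf_eq]

theorem collatzStep_one_add_U_mul (P : Polynomial (ZMod 2)) :
    collatzStep (1 + U * P) = oddPart (1 + M * P) := by
  have : 1 + M * (1 + U * P) = U * (1 + M * P) := by rw [M_eq_one_add_U]; grind
  rw [collatzStep, this, oddPart_U_mul]

theorem isLeast_iterate_oddPart_U_pow (n : ℕ) :
    IsLeast {m | collatzStep^[m] (oddPart (U ^ n)) = 1} 0 := by
  have : oddPart (U ^ n) = 1 := by
    rw [← mul_one (U ^ n), oddPart_U_pow_mul, oddPart_eq_self] <;> simp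
  exact ⟨by simp [this], fun m _ => m.zero_le⟩

theorem isLeast_one_add_U_pow_mul {e d : ℕ} (he : e ≠ 0) {Q : Polynomial (ZMod 2)}
    (hQ : Q ≠ 0)
    (h : IsLeast {m | collatzStep^[m] (oddPart (1 + M ^ e * Q)) = 1} d) :
    IsLeast {m | collatzStep^[m] (1 + U ^ e * Q) = 1} (d + e) := by
  obtain ⟨e, rfl⟩ := Nat.exists_eq_add_one_of_ne_zero he
  clear he
  induction e generalizing Q with
  | zero =>
    rw [zero_add, pow_one] at h
    refine isLeast_iterate_succ (one_add_U_pow_mul_ne_one 1 hQ) ?_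
    rwa [pow_one, collatzStep_one_add_U_mul]
  | succ e ih =>
    have hstep : collatzStep (1 + U ^ (e + 2) * Q) = 1 + U ^ (e + 1) * (M * Q) := by
      rw [pow_succ', mul_assoc, collatzStep_one_add_U_mul, mul_left_comm,
        oddPart_one_add_U_pow_mul e.succ_ne_zero]
    refine isLeast_iterate_succ (one_add_U_pow_mul_ne_one _ hQ) ?_
    rw [hstep]
    exact ih (mul_ne_zero M_ne_zero hQ) (by rwa [← mul_assoc, ← pow_succ])

theorem exists_eq_two_pow_add_two_pow_succ_mul {k i n : ℕ} (hi0 : i ≠ 0) (hi : i < 2 ^ k)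
    (hn : n + i = 2 ^ (k + 1)) :
    ∃ a t, 2 ^ a ≤ i ∧ t ≠ 0 ∧ n = 2 ^ a + 2 ^ (a + 1) * t := by
  obtain ⟨a, s, ⟨u, rfl⟩, rfl⟩ := Nat.exists_eq_two_pow_mul_odd hi0
  have hak : a ≤ k := by
    have : 2 ^ a < 2 ^ k := lt_of_le_of_lt (Nat.le_mul_of_pos_right _ (by omega)) hi
    exact ((Nat.pow_lt_pow_iff_right (by norm_num)).mp this).le
  have hk : 2 ^ k = 2 ^ a * 2 ^ (k - a) := by rw [← pow_add, Nat.add_sub_cancel' hak]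
  rw [hk] at hi
  obtain ⟨t, ht⟩ : ∃ t, 2 ^ (k - a) = u + 2 + t :=
    ⟨2 ^ (k - a) - u - 2, by have := Nat.lt_of_mul_lt_mul_left hi; omega⟩
  refine ⟨a, t + 1, Nat.le_mul_of_pos_right _ (by omega), by omega, ?_⟩
  rw [pow_succ, hk, ht] at hn
  rw [pow_succ]
  linarith

theorem isLeast_oddPart_one_add_M_pow {k i n : ℕ} (hi : i < 2 ^ k) (hn : n + i = 2 ^ (k + 1)) :
    IsLeast {m | collatzStep^[m] (oddPart (1 + M ^ n)) = 1} i := by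
  induction i using Nat.strong_induction_on generalizing n with
  | _ i ih =>
    rcases eq_or_ne i 0 with rfl | hi0
    · rw [add_zero] at hn
      rw [hn, one_add_M_pow_two_pow]
      exact isLeast_iterate_oddPart_U_pow _
    obtain ⟨a, t, hai, ht, rfl⟩ := exists_eq_two_pow_add_two_pow_succ_mul hi0 hi hn
    obtain ⟨K, hK, hMK⟩ := exists_M_pow_two_pow_mul_eq (a + 1) ht
    have ha : 0 < 2 ^ a := by positivity
    have hU : U ^ 2 ^ (a + 1) = U ^ 2 ^ a * U ^ 2 ^ a := by rw [pow_succ, pow_mul, sq]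
    have hstart : 1 + M ^ (2 ^ a + 2 ^ (a + 1) * t) =
        U ^ 2 ^ a * (1 + U ^ 2 ^ a * (M ^ 2 ^ a * K)) := by
      rw [pow_add, hMK, M_pow_two_pow, hU]; grind
    have hnext : 1 + M ^ (2 ^ a + 2 ^ (a + 1) * t + 2 ^ a) =
        U ^ 2 ^ (a + 1) * (1 + M ^ 2 ^ a * (M ^ 2 ^ a * K)) := by
      rw [add_right_comm, pow_add, pow_add, hMK, M_pow_two_pow, hU]; grind
    have hprev := ih (i - 2 ^ a) (by omega) (n := 2 ^ a + 2 ^ (a + 1) * t + 2 ^ a)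
      (by omega) (by omega)
    rw [hnext, oddPart_U_pow_mul] at hprev
    rw [hstart, oddPart_U_pow_mul, oddPart_one_add_U_pow_mul (by positivity)]
    simpa only [Nat.sub_add_cancel hai] using
      isLeast_one_add_U_pow_mul (by positivity) (mul_ne_zero (pow_ne_zero _ M_ne_zero) hK) hprev

theorem isLeast_iterate_M_pow_two_pow (r : ℕ) :
    IsLeast {m | collatzStep^[m] (M ^ 2 ^ r) = 1} (2 ^ r) := by
  have hlast : IsLeast {m | collatzStep^[m] (oddPart (1 + M ^ 2 ^ r * 1)) = 1} 0 := by
    rw [mul_one, one_add_M_pow_two_pow]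
    exact isLeast_iterate_oddPart_U_pow _
  have := isLeast_one_add_U_pow_mul (by positivity) one_ne_zero hlast
  rwa [zero_add, mul_one, ← M_pow_two_pow] at this

theorem isLeast_iterate_M_pow_two_pow_succ_sub {k j : ℕ} (hj0 : j ≠ 0) (hj : j ≤ 2 ^ k) :
    IsLeast {m | collatzStep^[m] (M ^ (2 ^ (k + 1) - j)) = 1} j := by
  have h2 : 2 ^ (k + 1) = 2 ^ k * 2 := pow_succ 2 k
  have hnext :
      IsLeast {m | collatzStep^[m] (collatzStep (M ^ (2 ^ (k + 1) - j))) = 1} (j - 1) := by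
    rw [collatzStep, ← pow_succ']
    exact isLeast_oddPart_one_add_M_pow (k := k) (by omega) (by omega)
  simpa only [Nat.sub_add_cancel (Nat.one_le_iff_ne_zero.mpr hj0)] using
    isLeast_iterate_succ (M_pow_ne_one (n := 2 ^ (k + 1) - j) (by omega)) hnext

theorem length_M_pow_general (r j : ℕ) (hj : j ≤ 2 ^ (r - 1) - 1)
    (A : Polynomial (ZMod 2)) (hA : A = M ^ (2 ^ r - j)) :
    (j ≠ 0 → collatzLength A = j + 1) ∧
    (j = 0 → collatzLength A = 2 ^ r + 1) := by
  subst hA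
  refine ⟨fun hj0 => ?_, ?_⟩
  · obtain ⟨k, rfl⟩ : ∃ k, r = k + 1 :=
      Nat.exists_eq_add_one_of_ne_zero (by rintro rfl; simp_all)
    rw [Nat.add_sub_cancel] at hj
    apply collatzLength_eq_of_isLeast
    rw [oddPart_M_pow]
    exact isLeast_iterate_M_pow_two_pow_succ_sub hj0 (by omega)
  · rintro rfl
    apply collatzLength_eq_of_isLeast
    rw [Nat.sub_zero, oddPart_M_pow]
    exact isLeast_iterate_M_pow_two_pow r

theorem length_M_pow (r j : ℕ) (hr : 1 ≤ r) (hj : j ≤ 2 ^ (r - 1) - 1)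
    (A : Polynomial (ZMod 2)) (hA : A = M ^ (2 ^ r - j)) :
    (j ≠ 0 → collatzLength A = j + 1) ∧
    (j = 0 → collatzLength A = 2 ^ r + 1) :=
  length_M_pow_general r j hj A hA
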